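/- Let S₀ ⊆ ℝ^n be a closed connected set and let S be a connected component of ℝ^n \ S₀. Then the boundary ∂S is connected. -/

import Mathlib

/-!
The closure of `S` and the complement of `S` are closed connected sets covering `ℝⁿ` (the
complement is `S₀` together with the closures of the other components, each of which
touches `S₀`), and they meet exactly in `∂S`. So the theorem is the unicoherence of `ℝⁿ`:
if `ℝⁿ = A ∪ B` with `A`, `B` closed and connected but `A ∩ B` splits into disjoint closed
parts `P ∋ p` and `Q ∋ q`, an Urysohn function `g` separating `P` from `Q` glues
`exp (iπg)` on `A` and `exp (-iπg)` on `B` into a circle-valued map. Since `ℝⁿ` is simply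
connected it has a real lift `φ`, and connectedness of `A` and of `B` forces `φ q - φ p`
to be both `π` and `-π`.
-/

open Set Real

section Components

variable {X : Type*} [TopologicalSpace X] [LocallyConnectedSpace X] {U : Set X}

theorem IsOpen.frontier_connectedComponentIn_subset (hU : IsOpen U) (x : X) :
    frontier (connectedComponentIn U x) ⊆ Uᶜ := by
  intro z hz hzU
  obtain ⟨w, hwz, hwx⟩ :=
    mem_closure_iff_nhds.mp hz.1 _ (connectedComponentIn_mem_nhds (hU.mem_nhds hzU))
  rw [connectedComponentIn_eq hwx, ← connectedComponentIn_eq hwz] at hz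
  exact hz.2 (hU.connectedComponentIn.interior_eq.symm ▸ mem_connectedComponentIn hzU)

theorem IsOpen.closure_connectedComponentIn_inter_compl_nonempty [PreconnectedSpace X]
    (hU : IsOpen U) (hUc : Uᶜ.Nonempty) {x : X} (hx : x ∈ U) :
    (closure (connectedComponentIn U x) ∩ Uᶜ).Nonempty := by
  by_contra hempty
  have hclopen : IsClopen (connectedComponentIn U x) := by
    rw [isClopen_iff_frontier_eq_empty, ← subset_empty_iff,
      ← not_nonempty_iff_eq_empty.mp hempty]
    exact subset_inter frontier_subset_closure (hU.frontier_connectedComponentIn_subset x)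
  obtain ⟨y, hyU⟩ := hUc
  exact hyU (connectedComponentIn_subset U x
    (hclopen.eq_univ ⟨x, mem_connectedComponentIn hx⟩ ▸ mem_univ y))

theorem isPreconnected_compl_connectedComponentIn_compl [PreconnectedSpace X] {K : Set X}
    (hK : IsClosed K) (hKc : IsPreconnected K) (x : X) :
    IsPreconnected (connectedComponentIn Kᶜ x)ᶜ := by
  obtain rfl | ⟨k, hk⟩ := K.eq_empty_or_nonempty
  · simp [connectedComponentIn_univ, PreconnectedSpace.connectedComponent_eq_univ,
      isPreconnected_empty]
  have hK_sub : K ⊆ (connectedComponentIn Kᶜ x)ᶜ := fun z hz hzx =>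
    connectedComponentIn_subset _ _ hzx hz
  refine isPreconnected_of_forall k fun y hy => ?_
  by_cases hyK : y ∈ K
  · exact ⟨K, hK_sub, hk, hyK, hKc⟩
  set D := connectedComponentIn Kᶜ y
  obtain ⟨w, hwD, hwK⟩ := hK.isOpen_compl.closure_connectedComponentIn_inter_compl_nonempty
    ⟨k, by simpa using hk⟩ hyK
  refine ⟨K ∪ closure D, union_subset hK_sub ?_, .inl hk, .inr (subset_closure
    (mem_connectedComponentIn hyK)), hKc.union w (by simpa using hwK) hwD
    isPreconnected_connectedComponentIn.closure⟩
  intro z hz hzx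
  have hzK : z ∉ K := connectedComponentIn_subset _ _ hzx
  have hzD : z ∈ D := by
    rw [closure_eq_self_union_frontier] at hz
    exact hz.resolve_right fun h => hK.isOpen_compl.frontier_connectedComponentIn_subset y h hzK
  rw [connectedComponentIn_eq hzx, ← connectedComponentIn_eq hzD] at hy
  exact hy (mem_connectedComponentIn hyK)

end Components

section Unicoherence

variable {X : Type*} [TopologicalSpace X]

theorem ContinuousMap.exists_circleExp_lift [SimplyConnectedSpace X]
    [LocallyPathConnectedSpace X] (f : C(X, Circle)) : ∃ φ : C(X, ℝ), Circle.exp ∘ φ = f := by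
  obtain ⟨x₀⟩ := (inferInstance : Nonempty X)
  obtain ⟨t, ht⟩ := Circle.exp_surjective (f x₀)
  obtain ⟨φ, ⟨-, hφ⟩, -⟩ := Circle.isCoveringMap_exp.existsUnique_continuousMap_lifts f x₀ t ht
  exact ⟨φ, hφ⟩

theorem IsPreconnected.sub_eq_sub_of_circleExp_eq {s : Set X} (hs : IsPreconnected s)
    {u v : X → ℝ} (hu : ContinuousOn u s) (hv : ContinuousOn v s)
    (h : ∀ z ∈ s, Circle.exp (u z) = Circle.exp (v z)) {x y : X} (hx : x ∈ s) (hy : y ∈ s) :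
    u x - v x = u y - v y := by
  have hdiscrete : IsDiscrete (AddSubgroup.zmultiples (2 * π) : Set ℝ) :=
    isDiscrete_iff_discreteTopology.mpr
      (inferInstanceAs (DiscreteTopology (AddSubgroup.zmultiples (2 * π))))
  refine hs.constant_of_mapsTo hdiscrete (hu.sub hv) (fun z hz => ?_) hx hy
  obtain ⟨m, hm⟩ := Circle.exp_eq_exp.mp (h z hz)
  exact ⟨m, by simp [hm]⟩

theorem IsPreconnected.inter_of_union_eq_univ [NormalSpace X] [SimplyConnectedSpace X]
    [LocallyPathConnectedSpace X] {A B : Set X} (hA : IsClosed A) (hB : IsClosed B)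
    (hAc : IsPreconnected A) (hBc : IsPreconnected B) (hAB : A ∪ B = univ) :
    IsPreconnected (A ∩ B) := by
  classical
  rw [isPreconnected_closed_iff]
  rintro P Q hP hQ hPQ ⟨p, hpAB, hpP⟩ ⟨q, hqAB, hqQ⟩
  by_contra hdisj
  obtain ⟨g, hgP, hgQ, -⟩ := exists_continuous_zero_one_of_isClosed
    ((hA.inter hB).inter hP) ((hA.inter hB).inter hQ)
    (disjoint_left.mpr fun z hzP hzQ => hdisj ⟨z, hzP.1, hzP.2, hzQ.2⟩)
  have hgp : g p = 0 := hgP ⟨hpAB, hpP⟩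
  have hgq : g q = 1 := hgQ ⟨hqAB, hqQ⟩
  have hsymm : ∀ z ∈ A ∩ B, Circle.exp (π * g z) = Circle.exp (-(π * g z)) := by
    intro z hz
    rcases hPQ hz with hzP | hzQ
    · simp [hgP ⟨hz, hzP⟩]
    · exact Circle.exp_eq_exp.mpr ⟨1, by rw [hgQ ⟨hz, hzQ⟩, Pi.one_apply]; ring⟩
  have hcont : Continuous fun z =>
      if z ∈ A then Circle.exp (π * g z) else Circle.exp (-(π * g z)) := by
    refine Continuous.if (fun z hz => hsymm z ⟨?_, ?_⟩) (by fun_prop) (by fun_prop)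
    · exact hA.frontier_subset hz
    · rw [frontier_eq_closure_inter_closure] at hz
      exact closure_minimal (compl_subset_iff_union.mpr hAB) hB hz.2
  obtain ⟨φ, hφ⟩ := ContinuousMap.exists_circleExp_lift ⟨_, hcont⟩
  have hφA : ∀ z ∈ A, Circle.exp (φ z) = Circle.exp (π * g z) := fun z hz => by
    simpa [hz] using congrFun hφ z
  have hφB : ∀ z ∈ B, Circle.exp (φ z) = Circle.exp (-(π * g z)) := fun z hz => by
    by_cases hzA : z ∈ A
    · rw [hφA z hzA, hsymm z ⟨hzA, hz⟩]
    · simpa [hzA] using congrFun hφ z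
  have hdiffA := hAc.sub_eq_sub_of_circleExp_eq φ.continuous.continuousOn (by fun_prop) hφA
    hpAB.1 hqAB.1
  have hdiffB := hBc.sub_eq_sub_of_circleExp_eq φ.continuous.continuousOn (by fun_prop) hφB
    hpAB.2 hqAB.2
  rw [hgp, hgq] at hdiffA hdiffB
  linarith [pi_pos]

end Unicoherence

theorem frontier_connectedComponentIn_connected (n : ℕ)
    (S₀ : Set (EuclideanSpace ℝ (Fin n))) (hS₀ : IsClosed S₀) (hconn : IsPreconnected S₀)
    (x : EuclideanSpace ℝ (Fin n)) :
    IsPreconnected (frontier (connectedComponentIn S₀ᶜ x)) := by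
  set S := connectedComponentIn S₀ᶜ x
  have hS : IsOpen S := hS₀.isOpen_compl.connectedComponentIn
  have hcover : closure S ∪ Sᶜ = univ :=
    eq_univ_of_forall fun z => (em (z ∈ S)).imp (fun h => subset_closure h) id
  rw [frontier_eq_closure_inter_closure, hS.isClosed_compl.closure_eq]
  exact isPreconnected_connectedComponentIn.closure.inter_of_union_eq_univ isClosed_closure
    hS.isClosed_compl (isPreconnected_compl_connectedComponentIn_compl hS₀ hconn x) hcover
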